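/- arXiv:2405.05709 — 6 statements merged into one kernel-verified Lean document; each statement's English description precedes it below -/
import Mathlib

section
/- For every real α with 0 ≤ α ≤ 1 and every real x with 0 < x and (2+x)·ln(2+x) − x·ln x ≤ 2, one has (2+x)^α − x^α ≥ 2α. -/
/-!
For 0 < b ≤ a let φ(t) = a^t - b^t; the theorem is the case a = 2 + x, b = x of
α φ(1) ≤ φ(α). This holds once φ(t)/t is antitone on (0, 1], i.e. once H(t) = t φ'(t) - φ(t) ≤ 0
on [0, 1]. Now H(0) = 0, the hypothesis says H(1) ≤ 0, and H'(t) = t φ''(t), where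
φ''(t) = b^t ((a/b)^t log² a - log² b) changes sign at most once, from negative to positive.
So H first decreases and then increases, and never exceeds max (H 0) (H 1) ≤ 0.
-/

open Real Set

theorem le_max_of_deriv_pos_imp_pos {f f' : ℝ → ℝ} {a b : ℝ} (hf : ContinuousOn f (Icc a b))
    (hf' : ∀ s ∈ Ioo a b, HasDerivAt f (f' s) s)
    (hcross : ∀ s ∈ Ioo a b, ∀ t ∈ Ioo a b, s ≤ t → 0 < f' s → 0 < f' t) :
    ∀ t ∈ Icc a b, f t ≤ max (f a) (f b) := by
  rintro t ⟨hat, htb⟩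
  by_cases hpos : ∃ s ∈ Ioo a t, 0 < f' s
  · obtain ⟨s, hs, hfs⟩ := hpos
    have hmono : MonotoneOn f (Icc t b) := by
      refine monotoneOn_of_hasDerivWithinAt_nonneg (f' := f') (convex_Icc t b)
        (hf.mono (Icc_subset_Icc hat le_rfl)) (fun r hr => ?_) (fun r hr => ?_) <;>
        rw [interior_Icc] at hr
      · exact (hf' r ⟨hat.trans_lt hr.1, hr.2⟩).hasDerivWithinAt
      · exact (hcross s ⟨hs.1, hs.2.trans_le htb⟩ r ⟨hat.trans_lt hr.1, hr.2⟩
          (hs.2.trans hr.1).le hfs).le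
    exact (hmono ⟨le_rfl, htb⟩ ⟨htb, le_rfl⟩ htb).trans (le_max_right _ _)
  · push Not at hpos
    have hanti : AntitoneOn f (Icc a t) := by
      refine antitoneOn_of_hasDerivWithinAt_nonpos (f' := f') (convex_Icc a t)
        (hf.mono (Icc_subset_Icc le_rfl htb)) (fun r hr => ?_) (fun r hr => ?_) <;>
        rw [interior_Icc] at hr
      · exact (hf' r ⟨hr.1, hr.2.trans_le htb⟩).hasDerivWithinAt
      · exact hpos r hr
    exact (hanti ⟨le_rfl, hat⟩ ⟨hat, le_rfl⟩ hat).trans (le_max_left _ _)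

theorem mul_rpow_sub_mul_rpow_pos_of_le {a b p q s t : ℝ} (hb : 0 < b) (hba : b ≤ a)
    (hp : 0 ≤ p) (hst : s ≤ t) (hs : 0 < p * a ^ s - q * b ^ s) :
    0 < p * a ^ t - q * b ^ t := by
  have factor : ∀ r : ℝ, p * a ^ r - q * b ^ r = b ^ r * (p * (a / b) ^ r - q) := fun r => by
    rw [div_rpow (hb.le.trans hba) hb.le]
    field_simp
  rw [factor] at hs ⊢
  have hs' : 0 < p * (a / b) ^ s - q := pos_of_mul_pos_right hs (rpow_pos_of_pos hb s).le
  have hmono : (a / b) ^ s ≤ (a / b) ^ t :=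
    rpow_le_rpow_of_exponent_le ((one_le_div hb).mpr hba) hst
  exact mul_pos (rpow_pos_of_pos hb t) (by nlinarith)

section

variable {a b : ℝ} (hb : 0 < b) (hba : b ≤ a)
include hb hba

theorem mul_deriv_le_rpow_sub_rpow (h : a * log a - b * log b ≤ a - b) {t : ℝ}
    (ht : t ∈ Icc (0 : ℝ) 1) : t * (a ^ t * log a - b ^ t * log b) ≤ a ^ t - b ^ t := by
  have ha : 0 < a := hb.trans_le hba
  set H : ℝ → ℝ := fun t => t * (a ^ t * log a - b ^ t * log b) - (a ^ t - b ^ t)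
  have hH : ∀ s, HasDerivAt H (s * (log a ^ 2 * a ^ s - log b ^ 2 * b ^ s)) s := fun s => by
    have da := (hasStrictDerivAt_const_rpow ha s).hasDerivAt
    have db := (hasStrictDerivAt_const_rpow hb s).hasDerivAt
    exact (((hasDerivAt_id' s).mul ((da.mul_const _).sub (db.mul_const _))).sub
      (da.sub db)).congr_deriv (by simp only [Pi.sub_apply]; ring)
  have hbound : H t ≤ max (H 0) (H 1) :=
    le_max_of_deriv_pos_imp_pos (fun s _ => (hH s).continuousAt.continuousWithinAt)
      (fun s _ => hH s) (fun s hs r hr hsr hpos => mul_pos hr.1 <|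
        mul_rpow_sub_mul_rpow_pos_of_le hb hba (sq_nonneg _) hsr
          (pos_of_mul_pos_right hpos hs.1.le))
      t ht
  have hH0 : H 0 = 0 := by simp [H]
  have hH1 : H 1 ≤ 0 := by simp [H]; linarith
  exact sub_nonpos.mp (hbound.trans (max_le hH0.le hH1))

theorem mul_sub_le_rpow_sub_rpow (h : a * log a - b * log b ≤ a - b) {α : ℝ} (hα0 : 0 ≤ α)
    (hα1 : α ≤ 1) : α * (a - b) ≤ a ^ α - b ^ α := by
  rcases hα0.eq_or_lt with rfl | hα
  · simp
  have ha : 0 < a := hb.trans_le hba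
  have hL : ∀ t, 0 < t → HasDerivAt (fun s => (a ^ s - b ^ s) / s)
      ((t * (a ^ t * log a - b ^ t * log b) - (a ^ t - b ^ t)) / t ^ 2) t := fun t ht =>
    (((hasStrictDerivAt_const_rpow ha t).hasDerivAt.sub
      (hasStrictDerivAt_const_rpow hb t).hasDerivAt).div (hasDerivAt_id' t) ht.ne').congr_deriv
        (by simp only [Pi.sub_apply]; ring)
  have hanti : AntitoneOn (fun s => (a ^ s - b ^ s) / s) (Icc α 1) := by
    refine antitoneOn_of_hasDerivWithinAt_nonpos (convex_Icc α 1) (f' := fun t =>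
      (t * (a ^ t * log a - b ^ t * log b) - (a ^ t - b ^ t)) / t ^ 2)
      (fun t ht => (hL t (hα.trans_le ht.1)).continuousAt.continuousWithinAt)
      (fun t ht => ?_) (fun t ht => ?_) <;> rw [interior_Icc] at ht
    · exact (hL t (hα.trans ht.1)).hasDerivWithinAt
    · exact div_nonpos_of_nonpos_of_nonneg (sub_nonpos.mpr <|
        mul_deriv_le_rpow_sub_rpow hb hba h ⟨(hα.trans ht.1).le, ht.2.le⟩) (sq_nonneg t)
  have := hanti ⟨le_rfl, hα1⟩ ⟨hα1, le_rfl⟩ hα1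
  simp only [rpow_one, div_one] at this
  rwa [le_div_iff₀ hα, mul_comm] at this

end

/-- Lemma 9 of the paper: for `0 ≤ α ≤ 1` and `0 < x` with
`(2+x)·ln(2+x) − x·ln x ≤ 2`, one has `(2+x)^α − x^α ≥ 2α`. -/
theorem stmt_0 (α x : ℝ) (hα0 : 0 ≤ α) (hα1 : α ≤ 1) (hx : 0 < x)
    (h : (2 + x) * Real.log (2 + x) - x * Real.log x ≤ 2) :
    (2 + x) ^ α - x ^ α ≥ 2 * α := by
  have := mul_sub_le_rpow_sub_rpow (a := 2 + x) hx (by linarith) (by linarith) hα0 hα1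
  linarith
end

section
/- Let 0 < x < 1. Then the equation (2+x)^α·(ln(2+x))² = x^α·(ln x)² in the real unknown α has the unique solution α = 2·ln((−ln x)/ln(2+x)) / ln((2+x)/x). Moreover, if in addition (2+x)·ln(2+x) − x·ln x ≤ 2, then this solution is strictly less than 1. -/
open Real

lemma aux5_stmt4 : 4 * Real.exp (-1) ^ 2 < 2 * (Real.log 2) ^ 2 := by
  have hexp1 : Real.exp 1 > 2.7182818283 := Real.exp_one_gt_d9
  have hlog2 : Real.log 2 > 0.6931471803 := Real.log_two_gt_d9
  have hexpinv : Real.exp (-1) = 1 / Real.exp 1 := by rw [Real.exp_neg]; ring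
  rw [hexpinv, div_pow, one_pow, mul_one_div,
    div_lt_iff₀ (by positivity : (0:ℝ) < Real.exp 1 ^ 2)]
  have hl : Real.log 2 > 0.69 := by linarith
  have he : Real.exp 1 > 2.7 := by linarith
  have ha : Real.log 2 ^ 2 > 0.47 := by nlinarith [hl]
  have hb : Real.exp 1 ^ 2 > 7.2 := by nlinarith [he]
  nlinarith [ha, hb]

/-- For `0 < x < 1`, the equation `(2+x)^α·(ln(2+x))² = x^α·(ln x)²` in the real
unknown `α` has the unique solution `α = 2·ln((−ln x)/ln(2+x)) / ln((2+x)/x)`;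
moreover, if `(2+x)·ln(2+x) − x·ln x ≤ 2`, this solution is strictly less than `1`. -/
theorem stmt_4 (x : ℝ) (hx0 : 0 < x) (hx1 : x < 1) :
    (∀ α : ℝ,
      (2 + x) ^ α * (Real.log (2 + x)) ^ 2 = x ^ α * (Real.log x) ^ 2 ↔
        α = 2 * Real.log ((-Real.log x) / Real.log (2 + x)) / Real.log ((2 + x) / x)) ∧
    ((2 + x) * Real.log (2 + x) - x * Real.log x ≤ 2 →
      2 * Real.log ((-Real.log x) / Real.log (2 + x)) / Real.log ((2 + x) / x) < 1) := by
  set L := Real.log (2 + x) with hLdef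
  set m := Real.log x with hmdef
  have h2x : (0:ℝ) < 2 + x := by linarith
  have hL : 0 < L := Real.log_pos (by linarith)
  have hm : m < 0 := Real.log_neg hx0 hx1
  have hDlog : Real.log ((2 + x) / x) = L - m :=
    Real.log_div (ne_of_gt h2x) (ne_of_gt hx0)
  have hD : 0 < L - m := by linarith
  have hDne : L - m ≠ 0 := ne_of_gt hD
  have hratio : m ^ 2 / L ^ 2 = ((-m) / L) ^ 2 := by
    rw [div_pow]; ring_nf
  have hratio_pos : 0 < ((-m) / L) ^ 2 :=
    pow_pos (div_pos (by linarith) hL) 2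
  have hlogr : Real.log (((-m) / L) ^ 2) = 2 * Real.log ((-m) / L) := by
    rw [Real.log_pow]; push_cast; ring
  constructor
  · intro α
    rw [hDlog]
    have hrw1 : (2 + x) ^ α = Real.exp (L * α) := by
      rw [Real.rpow_def_of_pos h2x]
    have hrw2 : x ^ α = Real.exp (m * α) := by
      rw [Real.rpow_def_of_pos hx0]
    rw [hrw1, hrw2]
    constructor
    · intro h
      have key : Real.exp (L * α) / Real.exp (m * α) = m ^ 2 / L ^ 2 := by
        rw [div_eq_div_iff (Real.exp_ne_zero _) (by positivity : (L:ℝ) ^ 2 ≠ 0)]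
        linear_combination h
      rw [← Real.exp_sub] at key
      have hlg := congrArg Real.log key
      rw [Real.log_exp, hratio, hlogr] at hlg
      rw [eq_div_iff hDne]
      linear_combination hlg
    · intro h
      have hα : L * α - m * α = 2 * Real.log ((-m) / L) := by
        rw [h]; field_simp
      have key : Real.exp (L * α) = Real.exp (m * α) * (m ^ 2 / L ^ 2) := by
        rw [hratio, ← Real.exp_log hratio_pos, ← Real.exp_add, hlogr]
        congr 1
        linarith [hα]
      rw [key]
      have hL2 : (L:ℝ) ^ 2 ≠ 0 := by positivity
      field_simp
  · intro _
    rw [hDlog, div_lt_one hD]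
    have hkey : x * m ^ 2 < (2 + x) * L ^ 2 := by
      have hx_eq : x = Real.exp m := (Real.exp_log hx0).symm
      set s : ℝ := -m / 2 with hs
      have hs_pos : 0 < s := by simp [hs]; linarith
      have hses : s * Real.exp (-s) ≤ Real.exp (-1) := by
        have h1 : s ≤ Real.exp (s - 1) := by
          have := Real.add_one_le_exp (s - 1)
          linarith
        have h2 : s * Real.exp (-s) ≤ Real.exp (s - 1) * Real.exp (-s) :=
          mul_le_mul_of_nonneg_right h1 (le_of_lt (Real.exp_pos _))
        rw [← Real.exp_add] at h2
        have h3 : s - 1 + -s = -1 := by ring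
        rwa [h3] at h2
      have hxm : x * m ^ 2 = 4 * (s * Real.exp (-s)) ^ 2 := by
        rw [hx_eq, show m = -(2 * s) by rw [hs]; ring,
          show (-(2 * s)) = -s + -s by ring, Real.exp_add]
        ring
      have h4 : x * m ^ 2 ≤ 4 * Real.exp (-1) ^ 2 := by
        rw [hxm]
        have hspos : 0 ≤ s * Real.exp (-s) := by positivity
        nlinarith [hses, Real.exp_pos (-1)]
      have hexp1 : Real.exp 1 > 2.7182818283 := Real.exp_one_gt_d9
      have hlog2 : Real.log 2 > 0.6931471803 := Real.log_two_gt_d9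
      have h5 : 4 * Real.exp (-1) ^ 2 < 2 * (Real.log 2) ^ 2 := aux5_stmt4
      have hlogle : Real.log 2 ≤ L := Real.log_le_log (by norm_num) (by linarith)
      have h6 : 2 * (Real.log 2) ^ 2 ≤ (2 + x) * L ^ 2 := by
        nlinarith [hlog2, hlogle, hL]
      linarith
    have hsq : ((-m) / L) ^ 2 < (2 + x) / x := by
      rw [div_pow, div_lt_div_iff₀ (by positivity) hx0]
      nlinarith [hkey]
    have hfin := Real.log_lt_log hratio_pos hsq
    rw [hlogr] at hfin
    rwa [hDlog] at hfin
end

section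
/- For every real α with 0 < α ≤ 1 and every real x with 0 < x and (2+x)·ln(2+x) − x·ln x ≤ 2, the upper incomplete gamma function satisfies Γ(α, x) ≥ e^{−x}, i.e., ∫_x^∞ e^{−u}·u^{α−1} du ≥ e^{−x}. -/
/-!
Since `c ↦ u ^ c` is convex, `u ^ (α - 1) ≥ 1 + (α - 1) log u`, hence
`Γ(α, x) ≥ e^{-x} + (α - 1) G(x)` with `G(x) = ∫ₓ^∞ e^{-u} log u du`; for `α ≤ 1` it suffices
that `G(x) ≤ 0`. The hypothesis forces `x < 1/5`, since `(2+x) log(2+x) - x log x` is increasing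
with value `> 2` at `1/5`. Then `G(x) ≤ 0` follows by dropping the nonpositive part over
`[x, 1/5]`, using `e^{-u} ≥ 1 - u` on `[1/5, 1]` and bounding `log u` on `[1, ∞)` by its tangent
line `u/2 - 1 + log 2` at `2`, which gives `G(x) ≤ (9/50) log 5 - 14/25 + e^{-1} log 2 < 0`.
-/

open Real MeasureTheory Set Filter Topology

lemma one_add_mul_log_le_rpow {u : ℝ} (hu : 0 < u) (c : ℝ) : 1 + c * log u ≤ u ^ c := by
  rw [rpow_def_of_pos hu, mul_comm (log u)]
  linarith [add_one_le_exp (c * log u)]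

lemma log_five : log 5 = 2 * log 2 + log (5 / 4) := by
  rw [← log_rpow two_pos, ← log_mul (by positivity) (by norm_num)]
  norm_num

lemma intervalIntegrable_exp_neg_mul_log (a b : ℝ) :
    IntervalIntegrable (fun u => exp (-u) * log u) volume a b :=
  intervalIntegral.intervalIntegrable_log'.continuousOn_mul continuous_neg.rexp.continuousOn

lemma intervalIntegrable_one_sub_mul_log (a b : ℝ) :
    IntervalIntegrable (fun u => (1 - u) * log u) volume a b :=
  intervalIntegral.intervalIntegrable_log'.continuousOn_mul (continuousOn_const.sub continuousOn_id)

lemma exp_neg_mul_log_le_tangent {u : ℝ} (hu : 0 < u) :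
    exp (-u) * log u ≤ exp (-u) * (u / 2 - 1 + log 2) := by
  have h := log_le_sub_one_of_pos (half_pos hu)
  rw [log_div hu.ne' two_ne_zero] at h
  exact mul_le_mul_of_nonneg_left (by linarith) (exp_pos _).le

lemma exp_neg_mul_tangent_nonneg {u : ℝ} (hu : 1 ≤ u) :
    0 ≤ exp (-u) * (u / 2 - 1 + log 2) :=
  mul_nonneg (exp_pos _).le (by linarith [log_two_gt_d9])

lemma hasDerivAt_exp_neg_mul_tangent_antideriv (u : ℝ) :
    HasDerivAt (fun t => -(exp (-t) * (t / 2 + log 2 - 1 / 2)))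
      (exp (-u) * (u / 2 - 1 + log 2)) u := by
  have hexp : HasDerivAt (fun t => exp (-t)) (-exp (-u)) u := by
    simpa using (hasDerivAt_neg u).exp
  have hlin : HasDerivAt (fun t : ℝ => t / 2 + log 2 - 1 / 2) (1 / 2) u :=
    (((hasDerivAt_id' u).div_const 2).add_const _).sub_const _
  exact (hexp.fun_mul hlin).fun_neg.congr_deriv (by ring)

lemma tendsto_exp_neg_mul_tangent_antideriv :
    Tendsto (fun t => -(exp (-t) * (t / 2 + log 2 - 1 / 2))) atTop (𝓝 0) := by
  have h := ((tendsto_pow_mul_exp_neg_atTop_nhds_zero 1).const_mul (1 / 2)).add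
    (tendsto_exp_neg_atTop_nhds_zero.const_mul (log 2 - 1 / 2))
  simpa using h.neg.congr fun t => by ring

lemma integrableOn_Ioi_one_exp_neg_mul_tangent :
    IntegrableOn (fun u => exp (-u) * (u / 2 - 1 + log 2)) (Ioi 1) :=
  integrableOn_Ioi_deriv_of_nonneg' (fun u _ => hasDerivAt_exp_neg_mul_tangent_antideriv u)
    (fun _ hu => exp_neg_mul_tangent_nonneg (le_of_lt hu)) tendsto_exp_neg_mul_tangent_antideriv

lemma integral_Ioi_one_exp_neg_mul_tangent :
    ∫ u in Ioi 1, exp (-u) * (u / 2 - 1 + log 2) = exp (-1) * log 2 := by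
  rw [integral_Ioi_of_hasDerivAt_of_nonneg'
    (fun u _ => hasDerivAt_exp_neg_mul_tangent_antideriv u)
    (fun _ hu => exp_neg_mul_tangent_nonneg (le_of_lt hu)) tendsto_exp_neg_mul_tangent_antideriv]
  ring

lemma integrableOn_Ioi_one_exp_neg_mul_log :
    IntegrableOn (fun u => exp (-u) * log u) (Ioi 1) := by
  refine integrableOn_Ioi_one_exp_neg_mul_tangent.mono' (by fun_prop)
    ((ae_restrict_iff' measurableSet_Ioi).2 (ae_of_all _ fun u hu => ?_))
  have hu : 1 < u := hu
  rw [norm_of_nonneg (mul_nonneg (exp_pos _).le (log_nonneg hu.le))]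
  exact exp_neg_mul_log_le_tangent (by linarith)

lemma integral_Ioi_one_exp_neg_mul_log_le :
    ∫ u in Ioi 1, exp (-u) * log u ≤ exp (-1) * log 2 := by
  rw [← integral_Ioi_one_exp_neg_mul_tangent]
  exact setIntegral_mono_on integrableOn_Ioi_one_exp_neg_mul_log
    integrableOn_Ioi_one_exp_neg_mul_tangent measurableSet_Ioi
    fun u hu => exp_neg_mul_log_le_tangent (by linarith [hu.out])

lemma integrableOn_Ioi_exp_neg_mul_log (x : ℝ) :
    IntegrableOn (fun u => exp (-u) * log u) (Ioi x) := by
  refine (((intervalIntegrable_exp_neg_mul_log x 1).def'.mono_set Ioc_subset_uIoc).union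
    integrableOn_Ioi_one_exp_neg_mul_log).mono_set fun u hu => ?_
  rcases le_or_gt u 1 with h | h
  exacts [Or.inl ⟨hu, h⟩, Or.inr h]

lemma hasDerivAt_one_sub_mul_log_antideriv {u : ℝ} (hu : u ≠ 0) :
    HasDerivAt (fun t => (t - t ^ 2 / 2) * log t - t + t ^ 2 / 4) ((1 - u) * log u) u := by
  have hpoly : HasDerivAt (fun t : ℝ => t - t ^ 2 / 2) (1 - u) u := by
    simpa using (hasDerivAt_id' u).fun_sub ((hasDerivAt_pow 2 u).div_const 2)
  have hsq : HasDerivAt (fun t : ℝ => t ^ 2 / 4) (u / 2) u :=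
    ((hasDerivAt_pow 2 u).div_const 4).congr_deriv (by norm_num; ring)
  have h := ((hpoly.fun_mul (hasDerivAt_log hu)).fun_sub (hasDerivAt_id' u)).fun_add hsq
  refine h.congr_deriv ?_
  field_simp
  ring

lemma integral_one_fifth_one_one_sub_mul_log :
    ∫ u in (1 / 5 : ℝ)..1, (1 - u) * log u = 9 / 50 * log 5 - 14 / 25 := by
  have hne : ∀ u ∈ uIcc (1 / 5 : ℝ) 1, u ≠ 0 := fun u hu => by
    rw [uIcc_of_le (by norm_num)] at hu
    exact (lt_of_lt_of_le (by norm_num) hu.1).ne'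
  rw [intervalIntegral.integral_eq_sub_of_hasDerivAt
    (fun u hu => hasDerivAt_one_sub_mul_log_antideriv (hne u hu))
    (intervalIntegrable_one_sub_mul_log _ _),
    one_div, log_inv]
  norm_num
  ring

lemma integral_exp_neg_mul_log_le {x : ℝ} (hx : 0 ≤ x) (hx5 : x ≤ 1 / 5) :
    ∫ u in x..1, exp (-u) * log u ≤ 9 / 50 * log 5 - 14 / 25 := by
  rw [← intervalIntegral.integral_add_adjacent_intervals (b := 1 / 5)
    (intervalIntegrable_exp_neg_mul_log _ _) (intervalIntegrable_exp_neg_mul_log _ _),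
    ← integral_one_fifth_one_one_sub_mul_log]
  have hleft : ∫ u in x..1 / 5, exp (-u) * log u ≤ 0 := by
    rw [intervalIntegral.integral_of_le hx5]
    exact setIntegral_nonpos measurableSet_Ioc fun u hu =>
      mul_nonpos_of_nonneg_of_nonpos (exp_pos _).le
        (log_nonpos (hx.trans hu.1.le) (by linarith [hu.2]))
  have hright : ∫ u in (1 / 5 : ℝ)..1, exp (-u) * log u ≤ ∫ u in (1 / 5 : ℝ)..1, (1 - u) * log u :=
    intervalIntegral.integral_mono_on (by norm_num) (intervalIntegrable_exp_neg_mul_log _ _)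
      (intervalIntegrable_one_sub_mul_log _ _)
      fun u hu => mul_le_mul_of_nonpos_right (by linarith [add_one_le_exp (-u)])
        (log_nonpos (by linarith [hu.1]) hu.2)
  linarith

lemma integral_Ioi_exp_neg_mul_log_nonpos {x : ℝ} (hx : 0 ≤ x) (hx5 : x ≤ 1 / 5) :
    ∫ u in Ioi x, exp (-u) * log u ≤ 0 := by
  have hx1 : x ≤ 1 := by linarith
  rw [← Ioc_union_Ioi_eq_Ioi hx1, setIntegral_union (Ioc_disjoint_Ioi le_rfl) measurableSet_Ioi
    ((integrableOn_Ioi_exp_neg_mul_log x).mono_set Ioc_subset_Ioi_self)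
    integrableOn_Ioi_one_exp_neg_mul_log, ← intervalIntegral.integral_of_le hx1]
  have hlog54 := log_le_sub_one_of_pos (by norm_num : (0 : ℝ) < 5 / 4)
  have hprod : exp (-1) * log 2 ≤ 0.3678794412 * log 2 :=
    mul_le_mul_of_nonneg_right exp_neg_one_lt_d9.le (log_nonneg one_le_two)
  linarith [integral_exp_neg_mul_log_le hx hx5, integral_Ioi_one_exp_neg_mul_log_le, log_five,
    log_two_lt_d9]

lemma exp_neg_add_mul_integral_log_le_integral_rpow {x s : ℝ} (hx : 0 ≤ x) (hs : 0 < s) :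
    exp (-x) + (s - 1) * ∫ u in Ioi x, exp (-u) * log u ≤
      ∫ u in Ioi x, exp (-u) * u ^ (s - 1) := by
  have hexp := integrableOn_exp_neg_Ioi x
  have hlog := (integrableOn_Ioi_exp_neg_mul_log x).const_mul (s - 1)
  have hlin : IntegrableOn (fun u => exp (-u) * (1 + (s - 1) * log u)) (Ioi x) :=
    (hexp.add hlog).congr_fun (fun u _ => by simp only [Pi.add_apply]; ring) measurableSet_Ioi
  calc exp (-x) + (s - 1) * ∫ u in Ioi x, exp (-u) * log u
      = ∫ u in Ioi x, exp (-u) * (1 + (s - 1) * log u) := by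
        rw [← integral_exp_neg_Ioi, ← integral_const_mul, ← integral_add hexp hlog]
        congr 1 with u
        ring
    _ ≤ ∫ u in Ioi x, exp (-u) * u ^ (s - 1) :=
        setIntegral_mono_on hlin ((GammaIntegral_convergent hs).mono_set (Ioi_subset_Ioi hx))
          measurableSet_Ioi fun u hu =>
            mul_le_mul_of_nonneg_left (one_add_mul_log_le_rpow (hx.trans_lt hu) _) (exp_pos _).le

lemma hasDerivAt_two_add_mul_log_sub_mul_log {x : ℝ} (hx : 0 < x) :
    HasDerivAt (fun y => (2 + y) * log (2 + y) - y * log y) (log (2 + x) - log x) x :=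
  (((hasDerivAt_mul_log (by linarith : 2 + x ≠ 0)).comp_const_add 2 x).fun_sub
    (hasDerivAt_mul_log hx.ne')).congr_deriv (by ring)

lemma strictMonoOn_two_add_mul_log_sub_mul_log :
    StrictMonoOn (fun x => (2 + x) * log (2 + x) - x * log x) (Ioi 0) := by
  refine strictMonoOn_of_deriv_pos (convex_Ioi 0)
    (fun x hx => (hasDerivAt_two_add_mul_log_sub_mul_log hx).continuousAt.continuousWithinAt)
    fun x hx => ?_
  rw [interior_Ioi] at hx
  rw [(hasDerivAt_two_add_mul_log_sub_mul_log hx).deriv, sub_pos]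
  exact log_lt_log hx (by linarith)

lemma two_lt_two_add_mul_log_sub_mul_log_one_fifth :
    2 < (2 + 1 / 5) * log (2 + 1 / 5) - 1 / 5 * log (1 / 5) := by
  have hlog : log (2 + 1 / 5) = log 2 + log (11 / 10) := by
    rw [← log_mul two_ne_zero (by norm_num)]; norm_num
  have hlog1110 := one_sub_inv_le_log_of_pos (by norm_num : (0 : ℝ) < 11 / 10)
  have hlog54 := one_sub_inv_le_log_of_pos (by norm_num : (0 : ℝ) < 5 / 4)
  rw [hlog, one_div, log_inv, log_five]
  norm_num at hlog1110 hlog54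
  linarith [log_two_gt_d9]

lemma lt_one_fifth_of_two_add_mul_log_sub_mul_log_le {x : ℝ} (hx : 0 < x)
    (h : (2 + x) * log (2 + x) - x * log x ≤ 2) : x < 1 / 5 := by
  by_contra! hx5
  have hmono := strictMonoOn_two_add_mul_log_sub_mul_log.monotoneOn (by norm_num : (1 / 5 : ℝ) ∈ Ioi 0)
    (by simpa using hx) hx5
  linarith [two_lt_two_add_mul_log_sub_mul_log_one_fifth]

/-- Lemma 10 of the paper: for `0 < α ≤ 1` and `0 < x` with
`(2+x)·ln(2+x) − x·ln x ≤ 2`, the upper incomplete gamma function satisfies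
`Γ(α, x) = ∫ₓ^∞ e^{−u} u^{α−1} du ≥ e^{−x}`. -/
theorem stmt_7 (α x : ℝ) (hα0 : 0 < α) (hα1 : α ≤ 1) (hx : 0 < x)
    (h : (2 + x) * Real.log (2 + x) - x * Real.log x ≤ 2) :
    (∫ u in Set.Ioi x, Real.exp (-u) * u ^ (α - 1)) ≥ Real.exp (-x) := by
  have hG := integral_Ioi_exp_neg_mul_log_nonpos hx.le
    (lt_one_fifth_of_two_add_mul_log_sub_mul_log_le hx h).le
  have hΓ := exp_neg_add_mul_integral_log_le_integral_rpow hx.le hα0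
  linarith [mul_nonneg_of_nonpos_of_nonpos (sub_nonpos.2 hα1) hG]
end

section
/- Let a be a real number with 0 < a ≤ 1 and δ ∈ (0,1), and let w : (0, δ) → ℝ be a function satisfying w(γ)·e^{w(γ)} = γ^{a}·ln γ and w(γ) ≥ −1 for all γ ∈ (0, δ). Then lim_{γ → 0⁺} w(γ)/ln γ = 0. -/
open Real Filter

/-- The limit `lim_{γ→0⁺} c(γ) = 0` from the paper's Lemma 14, where
`c(γ) = W_L(γ^a·ln γ)/ln γ` and the Lambert W value `w(γ)` is characterized by
`w(γ)·e^{w(γ)} = γ^a·ln γ` and `w(γ) ≥ −1`. -/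
theorem stmt_11 (a δ : ℝ) (ha0 : 0 < a) (ha1 : a ≤ 1) (hδ0 : 0 < δ) (hδ1 : δ < 1)
    (w : ℝ → ℝ)
    (hw : ∀ γ ∈ Set.Ioo (0 : ℝ) δ, w γ * Real.exp (w γ) = γ ^ a * Real.log γ)
    (hw1 : ∀ γ ∈ Set.Ioo (0 : ℝ) δ, -1 ≤ w γ) :
    Filter.Tendsto (fun γ => w γ / Real.log γ)
      (nhdsWithin 0 (Set.Ioi 0)) (nhds 0) := by
  have hg : Filter.Tendsto (fun γ : ℝ => Real.exp 1 * γ ^ a)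
      (nhdsWithin 0 (Set.Ioi 0)) (nhds 0) := by
    have h0 : (0 : ℝ) ^ a = 0 := Real.zero_rpow ha0.ne'
    have := ((Real.continuousAt_rpow_const 0 a (Or.inr ha0.le)).tendsto).const_mul
      (Real.exp 1)
    rw [h0, mul_zero] at this
    exact this.mono_left nhdsWithin_le_nhds
  refine squeeze_zero_norm' ?_ hg
  filter_upwards [Ioo_mem_nhdsGT_of_mem (Set.left_mem_Ico.mpr hδ0)] with γ hγ
  have hγ0 : 0 < γ := hγ.1
  have hγ1 : γ < 1 := hγ.2.trans hδ1
  have hlog : Real.log γ < 0 := Real.log_neg hγ0 hγ1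
  have hrpow : 0 < γ ^ a := Real.rpow_pos_of_pos hγ0 a
  have hexp : Real.exp (-1) ≤ Real.exp (w γ) := Real.exp_le_exp.mpr (hw1 γ hγ)
  have habs : |w γ| * Real.exp (-1) ≤ γ ^ a * |Real.log γ| := by
    calc |w γ| * Real.exp (-1) ≤ |w γ| * Real.exp (w γ) := by
          exact mul_le_mul_of_nonneg_left hexp (abs_nonneg _)
      _ = |w γ * Real.exp (w γ)| := by
          rw [abs_mul, abs_of_pos (Real.exp_pos _)]
      _ = |γ ^ a * Real.log γ| := by rw [hw γ hγ]
      _ = γ ^ a * |Real.log γ| := by rw [abs_mul, abs_of_pos hrpow]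
  have hwbound : |w γ| ≤ Real.exp 1 * (γ ^ a * |Real.log γ|) := by
    have h := mul_le_mul_of_nonneg_left habs (Real.exp_pos 1).le
    rw [← mul_assoc, mul_comm (Real.exp 1) (|w γ|), mul_assoc, ← Real.exp_add,
      add_neg_cancel, Real.exp_zero, mul_one] at h
    exact h
  have hlogabs : 0 < |Real.log γ| := abs_pos.mpr hlog.ne
  rw [Real.norm_eq_abs, abs_div]
  rw [div_le_iff₀ hlogabs]
  calc |w γ| ≤ Real.exp 1 * (γ ^ a * |Real.log γ|) := hwbound
    _ = Real.exp 1 * γ ^ a * |Real.log γ| := by ring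
end

section
/- For every σ > 0 and every θ ∈ [−π, π], the tail of the wrapped Gaussian density satisfies (1/√(2πσ²))·Σ_{l ∈ ℤ, l ≠ 0} exp(−(θ − 2πl)²/(2σ²)) ≤ (2/√(2πσ²))·exp(−π²/(2σ²)) / (1 − exp(−π²/(2σ²))). -/
open Real

/-- Tail estimate for the wrapped Gaussian density (key step in the paper's
Lemma 13): for `σ > 0` and `θ ∈ [−π, π]`,
`(1/√(2πσ²))·Σ_{l≠0} exp(−(θ−2πl)²/(2σ²))
  ≤ (2/√(2πσ²))·exp(−π²/(2σ²))/(1 − exp(−π²/(2σ²)))`. -/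
theorem stmt_12 (σ θ : ℝ) (hσ : 0 < σ) (hθ1 : -Real.pi ≤ θ) (hθ2 : θ ≤ Real.pi) :
    (1 / Real.sqrt (2 * Real.pi * σ ^ 2)) *
        ∑' l : {l : ℤ // l ≠ 0},
          Real.exp (-(θ - 2 * Real.pi * ((l : ℤ) : ℝ)) ^ 2 / (2 * σ ^ 2))
      ≤ (2 / Real.sqrt (2 * Real.pi * σ ^ 2)) *
          Real.exp (-Real.pi ^ 2 / (2 * σ ^ 2)) /
            (1 - Real.exp (-Real.pi ^ 2 / (2 * σ ^ 2))) := by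
  have hπ : (0:ℝ) < Real.pi := Real.pi_pos
  have hσ2 : (0:ℝ) < 2 * σ ^ 2 := by positivity
  set r : ℝ := Real.exp (-Real.pi ^ 2 / (2 * σ ^ 2)) with hr_def
  have hr0 : 0 < r := Real.exp_pos _
  have hr1 : r < 1 := by
    rw [hr_def, Real.exp_lt_one_iff]
    exact div_neg_of_neg_of_pos (neg_lt_zero.2 (by positivity)) hσ2
  -- geometric series
  have hgeo : HasSum (fun n : ℕ => r ^ (n + 1)) (r * (1 - r)⁻¹) := by
    have := (hasSum_geometric_of_lt_one hr0.le hr1).mul_left r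
    simpa [pow_succ, mul_comm] using this
  -- sum of r^|l| over l ≠ 0
  set g : ℤ → ℝ := fun l => if l = 0 then 0 else r ^ l.natAbs with hg_def
  have hg : HasSum g (r * (1 - r)⁻¹ + 0 + r * (1 - r)⁻¹) := by
    have h1 : HasSum (fun n : ℕ => g (n + 1)) (r * (1 - r)⁻¹) := by
      refine hgeo.congr_fun fun n => ?_
      simp only [hg_def]
      rw [if_neg (by omega)]
      congr 1
    have h2 : HasSum (fun n : ℕ => g (-(n + 1))) (r * (1 - r)⁻¹) := by
      refine hgeo.congr_fun fun n => ?_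
      simp only [hg_def]
      rw [if_neg (by omega)]
      congr 1
    have := h1.of_add_one_of_neg_add_one h2
    simpa [hg_def] using this
  have hgsub : HasSum (fun l : {l : ℤ // l ≠ 0} => r ^ (l : ℤ).natAbs)
      (r * (1 - r)⁻¹ + 0 + r * (1 - r)⁻¹) := by
    have hsupp : Function.support g ⊆ {l : ℤ | l ≠ 0} := by
      intro l hl
      simp only [Function.mem_support, hg_def] at hl
      intro h0; exact hl (by simp [h0])
    have := (hasSum_subtype_iff_of_support_subset hsupp).2 hg
    refine this.congr_fun fun l => ?_
    exact (if_neg l.2).symm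
  -- termwise bound
  have hterm : ∀ l : {l : ℤ // l ≠ 0},
      Real.exp (-(θ - 2 * Real.pi * ((l : ℤ) : ℝ)) ^ 2 / (2 * σ ^ 2)) ≤ r ^ (l : ℤ).natAbs := by
    rintro ⟨l, hl⟩
    set m : ℝ := (l : ℝ) with hm_def
    have hm1 : (1:ℝ) ≤ |m| := by
      rw [hm_def, ← Int.cast_abs]
      exact_mod_cast Int.one_le_abs hl
    have hnat : ((l.natAbs : ℕ) : ℝ) = |m| := by
      rw [hm_def]; rw [Nat.cast_natAbs]; norm_cast
    have key : Real.pi ^ 2 * |m| ≤ (θ - 2 * Real.pi * m) ^ 2 := by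
      have h1 : Real.pi * |m| ≤ |θ - 2 * Real.pi * m| := by
        have habs : |2 * Real.pi * m| = 2 * Real.pi * |m| := by
          rw [abs_mul, abs_of_nonneg (by positivity : (0:ℝ) ≤ 2 * Real.pi)]
        have h := abs_sub_abs_le_abs_sub (2 * Real.pi * m) θ
        rw [habs] at h
        have hθabs : |θ| ≤ Real.pi := abs_le.2 ⟨hθ1, hθ2⟩
        rw [abs_sub_comm] at h
        nlinarith [abs_nonneg θ]
      have h2 : (Real.pi * |m|) ^ 2 ≤ (θ - 2 * Real.pi * m) ^ 2 := by
        have := mul_self_le_mul_self (by positivity) h1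
        simpa [← sq, sq_abs] using this
      have h3 : |m| ≤ m ^ 2 := by
        have : |m| * 1 ≤ |m| * |m| := by nlinarith
        nlinarith [sq_abs m]
      nlinarith [sq_nonneg Real.pi]
    rw [← Real.exp_nat_mul, Real.exp_le_exp, hnat]
    have heq : |m| * (-Real.pi ^ 2 / (2 * σ ^ 2)) = -(Real.pi ^ 2 * |m|) / (2 * σ ^ 2) := by
      ring
    rw [heq, div_le_div_iff₀ hσ2 hσ2]
    nlinarith [key, hσ2]
  -- summability of LHS
  have hsummLHS : Summable (fun l : {l : ℤ // l ≠ 0} =>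
      Real.exp (-(θ - 2 * Real.pi * ((l : ℤ) : ℝ)) ^ 2 / (2 * σ ^ 2))) :=
    Summable.of_nonneg_of_le (fun l => (Real.exp_pos _).le) hterm hgsub.summable
  have hle : (∑' l : {l : ℤ // l ≠ 0},
        Real.exp (-(θ - 2 * Real.pi * ((l : ℤ) : ℝ)) ^ 2 / (2 * σ ^ 2)))
      ≤ r * (1 - r)⁻¹ + 0 + r * (1 - r)⁻¹ := by
    rw [← hgsub.tsum_eq]
    exact Summable.tsum_le_tsum hterm hsummLHS hgsub.summable
  have hsqrt : 0 < Real.sqrt (2 * Real.pi * σ ^ 2) := Real.sqrt_pos.2 (by positivity)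
  have hrhs : (2 / Real.sqrt (2 * Real.pi * σ ^ 2)) * r / (1 - r)
      = (1 / Real.sqrt (2 * Real.pi * σ ^ 2)) * (r * (1 - r)⁻¹ + 0 + r * (1 - r)⁻¹) := by
    field_simp
    ring
  rw [hrhs]
  exact mul_le_mul_of_nonneg_left hle (by positivity)
end

section
/- For every σ > 0, with f_G(θ) = (1/√(2πσ²))·exp(−θ²/(2σ²)), one has −∫_{−π}^{π} f_G(θ)·ln f_G(θ) dθ = (∫_{−π}^{π} f_G(θ) dθ)·(1/2)·ln(2πeσ²) − √(π/(2σ²))·exp(−π²/(2σ²)). -/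
/-!
The Gaussian density `p` with mean `μ` and variance `v` has `-log p = ½ log (2πv) + (x - μ)²/(2v)`,
and the second-moment term is an exact derivative up to `p` itself:
`((x - μ) p)' = p - (x - μ)²/v · p`. Hence on any interval `[a, b]`
`∫ -p log p = ½ log (2πev) ∫ p - ½ [(x - μ) p]ₐᵇ`, and for `μ = 0`, `[a, b] = [-π, π]` the boundary
term is `π p(π) = √(π/(2σ²)) e^{-π²/(2σ²)}`.
-/

open Real MeasureTheory intervalIntegral

open scoped NNReal

namespace ProbabilityTheory

variable {μ : ℝ} {v : ℝ≥0}

@[fun_prop]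
lemma continuous_gaussianPDFReal (μ : ℝ) (v : ℝ≥0) : Continuous (gaussianPDFReal μ v) := by
  unfold gaussianPDFReal
  fun_prop

lemma hasDerivAt_gaussianPDFReal (x : ℝ) :
    HasDerivAt (gaussianPDFReal μ v) (-(x - μ) / v * gaussianPDFReal μ v x) x := by
  have hexponent : HasDerivAt (fun y ↦ -(y - μ) ^ 2 / (2 * v)) (-(x - μ) / v) x :=
    ((((hasDerivAt_id' x).sub_const μ).pow 2).neg.div_const (2 * (v : ℝ))).congr_deriv
      (by field_simp; ring)
  exact (hexponent.exp.const_mul (√(2 * π * v))⁻¹).congr_deriv (by rw [gaussianPDFReal]; ring)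

lemma hasDerivAt_sub_mul_gaussianPDFReal (x : ℝ) :
    HasDerivAt (fun y ↦ (y - μ) * gaussianPDFReal μ v y)
      (gaussianPDFReal μ v x - (x - μ) ^ 2 / v * gaussianPDFReal μ v x) x :=
  (((hasDerivAt_id' x).sub_const μ).mul (hasDerivAt_gaussianPDFReal x)).congr_deriv (by ring)

lemma log_gaussianPDFReal (hv : v ≠ 0) (x : ℝ) :
    log (gaussianPDFReal μ v x) = -(1 / 2) * log (2 * π * v) - (x - μ) ^ 2 / (2 * v) := by
  have : 0 < 2 * π * v := by positivity
  rw [gaussianPDFReal, log_mul (by positivity) (exp_pos _).ne', log_exp, log_inv,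
    log_sqrt this.le]
  ring

lemma negMulLog_gaussianPDFReal (hv : v ≠ 0) (x : ℝ) :
    negMulLog (gaussianPDFReal μ v x) = 1 / 2 * log (2 * π * rexp 1 * v) * gaussianPDFReal μ v x
      - 1 / 2 * (gaussianPDFReal μ v x - (x - μ) ^ 2 / v * gaussianPDFReal μ v x) := by
  have : 0 < 2 * π * v := by positivity
  rw [negMulLog, log_gaussianPDFReal hv, mul_right_comm _ (rexp 1),
    log_mul this.ne' (exp_pos _).ne', log_exp]
  field_simp
  ring

theorem integral_negMulLog_gaussianPDFReal (hv : v ≠ 0) (a b : ℝ) :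
    ∫ x in a..b, negMulLog (gaussianPDFReal μ v x)
      = 1 / 2 * log (2 * π * rexp 1 * v) * (∫ x in a..b, gaussianPDFReal μ v x)
        - 1 / 2 * ((b - μ) * gaussianPDFReal μ v b - (a - μ) * gaussianPDFReal μ v a) := by
  have hp := (continuous_gaussianPDFReal μ v).intervalIntegrable (μ := volume) a b
  have hd : IntervalIntegrable
      (fun x ↦ gaussianPDFReal μ v x - (x - μ) ^ 2 / v * gaussianPDFReal μ v x) volume a b :=
    (by fun_prop : Continuous _).intervalIntegrable a b
  rw [integral_congr fun x _ ↦ negMulLog_gaussianPDFReal hv x,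
    integral_sub (hp.const_mul _) (hd.const_mul _), intervalIntegral.integral_const_mul,
    intervalIntegral.integral_const_mul,
    integral_eq_sub_of_hasDerivAt (fun x _ ↦ hasDerivAt_sub_mul_gaussianPDFReal x) hd]

end ProbabilityTheory

open ProbabilityTheory

/-- Entropy integral of a Gaussian density restricted to `[−π, π]` (from the
proof of the paper's Lemma 13): for `σ > 0` and
`f_G(θ) = (1/√(2πσ²))·exp(−θ²/(2σ²))`,
`−∫_{−π}^{π} f_G ln f_G = (∫_{−π}^{π} f_G)·(1/2)·ln(2πeσ²) − √(π/(2σ²))·e^{−π²/(2σ²)}`. -/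
theorem stmt_13 (σ : ℝ) (hσ : 0 < σ) :
    -(∫ θ in (-Real.pi)..Real.pi,
        (1 / Real.sqrt (2 * Real.pi * σ ^ 2)) * Real.exp (-θ ^ 2 / (2 * σ ^ 2)) *
          Real.log ((1 / Real.sqrt (2 * Real.pi * σ ^ 2)) *
            Real.exp (-θ ^ 2 / (2 * σ ^ 2))))
      = (∫ θ in (-Real.pi)..Real.pi,
            (1 / Real.sqrt (2 * Real.pi * σ ^ 2)) * Real.exp (-θ ^ 2 / (2 * σ ^ 2))) *
          ((1 / 2) * Real.log (2 * Real.pi * Real.exp 1 * σ ^ 2))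
        - Real.sqrt (Real.pi / (2 * σ ^ 2)) *
            Real.exp (-Real.pi ^ 2 / (2 * σ ^ 2)) := by
  let v : ℝ≥0 := ⟨σ ^ 2, sq_nonneg σ⟩
  have hv_coe : (v : ℝ) = σ ^ 2 := rfl
  have hv : v ≠ 0 := by rw [ne_eq, ← NNReal.coe_eq_zero, hv_coe]; positivity
  have hp (θ : ℝ) :
      1 / √(2 * π * σ ^ 2) * rexp (-θ ^ 2 / (2 * σ ^ 2)) = gaussianPDFReal 0 v θ := by
    rw [gaussianPDFReal, hv_coe, sub_zero, one_div]
  have hsqrt : π / √(2 * π * σ ^ 2) = √(π / (2 * σ ^ 2)) := by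
    rw [div_eq_iff (by positivity), ← sqrt_mul (by positivity),
      show π / (2 * σ ^ 2) * (2 * π * σ ^ 2) = π ^ 2 by field_simp, sqrt_sq pi_pos.le]
  have hboundary : (π - 0) * gaussianPDFReal 0 v π - (-π - 0) * gaussianPDFReal 0 v (-π)
      = 2 * (√(π / (2 * σ ^ 2)) * rexp (-π ^ 2 / (2 * σ ^ 2))) := by
    rw [← hp, ← hp, ← hsqrt, neg_sq]
    ring
  simp only [hp, ← intervalIntegral.integral_neg, ← neg_mul, ← negMulLog.eq_1]
  rw [integral_negMulLog_gaussianPDFReal hv, hboundary, hv_coe]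
  ring
end
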